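/- arXiv:1107.4442 — 2 statements merged into one kernel-verified Lean document; each statement's English description precedes it below -/
import Mathlib

section
/- Let G = (V,E) be a strongly connected finite directed graph with designated source vertex s and nonempty target set T, where each non-target vertex v carries a stack: an infinite sequence of arcs emanating from v prescribing the successive exits from v. If every stack is m-repetitive (consists of successive blocks of m consecutive equal terms), then the hitting sequence of the stack walk started from s is m-repetitive: its terms satisfy u_{am+1} = u_{am+2} = … = u_{am+m} for all a ≥ 0. -/
open Function

section RotorWalkSetup

variable {V E : Type} [Fintype V] [DecidableEq V] [Fintype E]

/-- The directed multigraph with arc set `E`, source map `src` and head map `head`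
is strongly connected. -/
def StronglyConnected (src head : E → V) : Prop :=
  ∀ v w : V, Relation.ReflTransGen (fun a b => ∃ e : E, src e = a ∧ head e = b) v w

/-- The outdegree of a vertex `v`. -/
def outdeg (src : E → V) (v : V) : ℕ :=
  (Finset.univ.filter fun e : E => src e = v).card

/-- One step of the stack walk with restart at the source: from a target vertex the
walk restarts at `s`; from a non-target vertex `v` it departs along the arc
`f v i`, where `i` is the number of previous departures from `v` (recorded in the
second component of the state). -/
def walkStep (head : E → V) (T : Finset V) (s : V) (f : V → ℕ → E)
    (p : V × (V → ℕ)) : V × (V → ℕ) :=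
  if p.1 ∈ T then (s, p.2)
  else (head (f p.1 (p.2 p.1)), Function.update p.2 p.1 (p.2 p.1 + 1))

/-- The vertex visited at time `n` by the stack walk started at the source `s`. -/
def walk (head : E → V) (T : Finset V) (s : V) (f : V → ℕ → E) (n : ℕ) : V :=
  ((walkStep head T s f)^[n] (s, fun _ => 0)).1

/-- `g : ℕ → E` is a rotor stack at `v` (a rotor mechanism together with an initial
rotor position): every entry is an arc emanating from `v`, the sequence is periodic
with period `d`, and each fundamental period lists every arc emanating from `v`
exactly once. -/
def IsRotorStack (src : E → V) (d : ℕ) (v : V) (g : ℕ → E) : Prop :=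
  (∀ i, src (g i) = v) ∧ (∀ i, g (i + d) = g i) ∧
    (∀ e : E, src e = v → ∃ i, i < d ∧ g i = e) ∧
    (∀ i j, i < d → j < d → g i = g j → i = j)

end RotorWalkSetup

namespace RepAux

variable {V E : Type} [DecidableEq V]

def fire (head : E → V) (f : V → ℕ → E) (K : (V → ℤ) × (V → ℕ)) (v : V) :
    (V → ℤ) × (V → ℕ) :=
  (fun u => K.1 u + (if u = head (f v (K.2 v)) then 1 else 0) - (if u = v then 1 else 0),
   Function.update K.2 v (K.2 v + 1))

def fires (head : E → V) (f : V → ℕ → E) :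
    (V → ℤ) × (V → ℕ) → List V → (V → ℤ) × (V → ℕ)
  | K, [] => K
  | K, v :: L => fires head f (fire head f K v) L

def Legal (T : Finset V) (head : E → V) (f : V → ℕ → E) :
    (V → ℤ) × (V → ℕ) → List V → Prop
  | _, [] => True
  | K, v :: L => v ∉ T ∧ 1 ≤ K.1 v ∧ Legal T head f (fire head f K v) L

def Complete (T : Finset V) (K : (V → ℤ) × (V → ℕ)) : Prop :=
  ∀ v, v ∉ T → K.1 v ≤ 0

variable (head : E → V) (T : Finset V) (f : V → ℕ → E)

@[simp] lemma fires_nil (K) : fires head f K [] = K := rfl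

@[simp] lemma fires_cons (K) (v : V) (L : List V) :
    fires head f K (v :: L) = fires head f (fire head f K v) L := rfl

lemma fire_pair (χ : V → ℤ) (c : V → ℕ) (v : V) :
    fire head f (χ, c) v =
      ((fun u => χ u + (if u = head (f v (c v)) then 1 else 0) - (if u = v then 1 else 0)),
       Function.update c v (c v + 1)) := rfl

@[simp] lemma Legal_nil (K) : Legal T head f K [] := trivial

lemma Legal_cons {K} {v : V} {L : List V} :
    Legal T head f K (v :: L) ↔
      v ∉ T ∧ 1 ≤ K.1 v ∧ Legal T head f (fire head f K v) L := Iff.rfl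

lemma fires_append (K) (L₁ L₂ : List V) :
    fires head f K (L₁ ++ L₂) = fires head f (fires head f K L₁) L₂ := by
  induction L₁ generalizing K with
  | nil => rfl
  | cons v L ih => simp [fires, ih]

lemma Legal_append {K} {L₁ L₂ : List V} (h1 : Legal T head f K L₁)
    (h2 : Legal T head f (fires head f K L₁) L₂) :
    Legal T head f K (L₁ ++ L₂) := by
  induction L₁ generalizing K with
  | nil => simpa using h2
  | cons v L ih =>
    obtain ⟨ha, hb, hc⟩ := h1
    exact ⟨ha, hb, ih hc (by simpa using h2)⟩

lemma fire_fst_le (K) {v u : V} (h : u ≠ v) :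
    K.1 u ≤ (fire head f K v).1 u := by
  simp only [fire, if_neg h]
  split <;> omega

lemma fire_snd_ne (K) {v u : V} (h : u ≠ v) :
    (fire head f K v).2 u = K.2 u := Function.update_of_ne h _ _

lemma fire_comm (K) {v w : V} (h : v ≠ w) :
    fire head f (fire head f K v) w = fire head f (fire head f K w) v := by
  refine Prod.ext ?_ ?_
  · funext u
    simp only [fire, Function.update_of_ne (Ne.symm h), Function.update_of_ne h]
    ring
  · simp only [fire, Function.update_of_ne (Ne.symm h), Function.update_of_ne h]
    exact Function.update_comm h _ _ _

lemma legal_front {v : V} (hvT : v ∉ T) :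
    ∀ (L : List V) (K), 1 ≤ K.1 v → Legal T head f K L →
      Complete T (fires head f K L) →
      ∃ L', Legal T head f K (v :: L') ∧
        fires head f K (v :: L') = fires head f K L ∧ L'.length + 1 = L.length := by
  intro L
  induction L with
  | nil =>
    intro K h1 _ hC
    have h0 : K.1 v ≤ 0 := hC v hvT
    omega
  | cons w L ih =>
    intro K h1 hL hC
    obtain ⟨hwT, hw1, hL2⟩ := hL
    by_cases hvw : v = w
    · subst hvw
      exact ⟨L, ⟨hvT, h1, hL2⟩, rfl, rfl⟩
    · have h1' : 1 ≤ (fire head f K w).1 v :=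
        le_trans h1 (fire_fst_le head f K hvw)
      obtain ⟨L₂, hleg, hfe, hlen⟩ := ih (fire head f K w) h1' hL2 (by simpa using hC)
      obtain ⟨_, hv1, hleg2⟩ := hleg
      refine ⟨w :: L₂, ⟨hvT, h1, hwT,
        le_trans hw1 (fire_fst_le head f K (Ne.symm hvw)), ?_⟩, ?_, by simpa using hlen⟩
      · rw [fire_comm head f K hvw]; exact hleg2
      · show fires head f (fire head f (fire head f K v) w) L₂ = _
        rw [fire_comm head f K hvw]
        exact hfe

lemma legal_front_iter {v : V} (hvT : v ∉ T) :
    ∀ (i : ℕ) (K) (L : List V), Legal T head f K (List.replicate i v) →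
      Legal T head f K L → Complete T (fires head f K L) →
      ∃ L', Legal T head f (fires head f K (List.replicate i v)) L' ∧
        fires head f (fires head f K (List.replicate i v)) L' = fires head f K L ∧
        L'.length + i = L.length := by
  intro i
  induction i with
  | zero => intro K L _ hL hC; exact ⟨L, by simpa, by simp, by simp⟩
  | succ i ih =>
    intro K L hR hL hC
    rw [List.replicate_succ] at hR ⊢
    obtain ⟨_, h1, hR'⟩ := hR
    obtain ⟨L₁, hleg1, hfe1, hlen1⟩ := legal_front head T f hvT L K h1 hL hC
    obtain ⟨_, _, hlegL₁⟩ := hleg1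
    have hC1 : Complete T (fires head f (fire head f K v) L₁) := by
      have : fires head f (fire head f K v) L₁ = fires head f K L := hfe1
      rw [this]; exact hC
    obtain ⟨L', ha, hb, hc⟩ := ih (fire head f K v) L₁ hR' hlegL₁ hC1
    refine ⟨L', by simpa using ha, ?_, by omega⟩
    simp only [fires_cons]
    rw [hb]
    exact hfe1

lemma macro_aux {v : V} (hvT : v ∉ T) (m : ℕ) (c : V → ℕ)
    (harc : ∀ i, i < m → f v (c v + i) = f v (c v)) :
    ∀ i, i ≤ m →
      Legal T head f ((fun u => (m : ℤ) * (if u = v then 1 else 0)), c)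
        (List.replicate i v) ∧
      fires head f ((fun u => (m : ℤ) * (if u = v then 1 else 0)), c)
        (List.replicate i v) =
        ((fun u => (m : ℤ) * (if u = v then 1 else 0)
            + (i : ℤ) * (if u = head (f v (c v)) then 1 else 0)
            - (i : ℤ) * (if u = v then 1 else 0)),
         Function.update c v (c v + i)) := by
  intro i
  induction i with
  | zero =>
    intro _
    refine ⟨trivial, ?_⟩
    refine Prod.ext ?_ ?_
    · funext u; simp
    · simp
  | succ i ih =>
    intro hi1
    have hi : i < m := hi1
    obtain ⟨hL, hF⟩ := ih (le_of_lt hi)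
    rw [List.replicate_succ']
    have hval : 1 ≤ (fires head f ((fun u => (m : ℤ) * (if u = v then 1 else 0)), c)
        (List.replicate i v)).1 v := by
      rw [hF]
      simp only [if_pos rfl]
      split_ifs <;> omega
    constructor
    · refine Legal_append head T f hL ?_
      exact ⟨hvT, hval, trivial⟩
    · rw [fires_append, hF]
      show fire head f _ v = _
      unfold fire
      have hcv : Function.update c v (c v + i) v = c v + i := Function.update_self _ _ _
      refine Prod.ext ?_ ?_
      · funext u
        simp only [hcv, harc i hi]
        push_cast
        ring
      · simp only [hcv, Function.update_idem, Nat.add_assoc]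

lemma lockstep (m : ℕ) (hm : 1 ≤ m)
    (hrep : ∀ v : V, v ∉ T → ∀ a i j, i < m → j < m →
      f v (a * m + i) = f v (a * m + j)) :
    ∀ (n : ℕ) (L : List V) (c : V → ℕ) (v : V), L.length ≤ n → (∀ u, m ∣ c u) →
      Legal T head f ((fun u => (m : ℤ) * (if u = v then 1 else 0)), c) L →
      Complete T (fires head f ((fun u => (m : ℤ) * (if u = v then 1 else 0)), c) L) →
      ∃ (t : V) (c' : V → ℕ), (∀ u, m ∣ c' u) ∧
        fires head f ((fun u => (m : ℤ) * (if u = v then 1 else 0)), c) L =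
          ((fun u => (m : ℤ) * (if u = t then 1 else 0)), c') := by
  intro n
  induction n with
  | zero =>
    intro L c v hlen hdiv hL hC
    have : L = [] := List.length_eq_zero_iff.mp (Nat.le_zero.mp hlen)
    subst this
    exact ⟨v, c, hdiv, rfl⟩
  | succ n ih =>
    intro L c v hlen hdiv hL hC
    by_cases hvT : v ∈ T
    · cases L with
      | nil => exact ⟨v, c, hdiv, rfl⟩
      | cons w L' =>
        obtain ⟨hwT, hw1, _⟩ := hL
        by_cases hwv : w = v
        · exact absurd (hwv ▸ hvT) hwT
        · simp [hwv] at hw1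
    · have harc : ∀ i, i < m → f v (c v + i) = f v (c v) := by
        intro i hi
        obtain ⟨q, hq⟩ := hdiv v
        have h0 : (0 : ℕ) < m := hm
        have h := hrep v hvT q i 0 hi h0
        rw [hq, Nat.mul_comm m q]
        simpa using h
      obtain ⟨hRleg, hRfe⟩ := macro_aux head T f hvT m c harc m le_rfl
      obtain ⟨L₂, hleg₂, hfe₂, hlen₂⟩ := legal_front_iter head T f hvT m _ L hRleg hL hC
      have hform : fires head f ((fun u => (m : ℤ) * (if u = v then 1 else 0)), c)
          (List.replicate m v) =
          ((fun u => (m : ℤ) * (if u = head (f v (c v)) then 1 else 0)),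
           Function.update c v (c v + m)) := by
        rw [hRfe]
        refine Prod.ext ?_ rfl
        funext u; ring
      rw [hform] at hleg₂ hfe₂
      have hdiv₂ : ∀ u, m ∣ Function.update c v (c v + m) u := by
        intro u
        by_cases hu : u = v
        · subst hu
          simp only [Function.update_self]
          exact dvd_add (hdiv u) dvd_rfl
        · rw [Function.update_of_ne hu]
          exact hdiv u
      have hC₂ : Complete T
          (fires head f ((fun u => (m : ℤ) * (if u = head (f v (c v)) then 1 else 0)),
            Function.update c v (c v + m)) L₂) := by
        rw [hfe₂]; exact hC
      obtain ⟨t, c', hd', he'⟩ := ih L₂ _ (head (f v (c v))) (by omega) hdiv₂ hleg₂ hC₂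
      exact ⟨t, c', hd', by rw [← hfe₂, he']⟩
    
end RepAux


/-- **Theorem (m-repetitive stacks give an m-repetitive hitting sequence).**
Each non-target vertex carries an arbitrary stack of arcs emanating from it.  If every
stack is `m`-repetitive (it consists of successive blocks of `m` equal terms), then the
hitting sequence of the stack walk started at `s` (enumerated by the increasing
enumeration `k` of its hitting times) is `m`-repetitive. -/
theorem repetitive_stacks_repetitive_hitting_sequence
    {V E : Type} [Fintype V] [DecidableEq V] [Fintype E]
    (src head : E → V) (hconn : StronglyConnected src head)
    (T : Finset V) (hT : T.Nonempty) (s : V) (hs : s ∉ T)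
    (f : V → ℕ → E)
    (hsrc : ∀ v : V, v ∉ T → ∀ i, src (f v i) = v)
    (m : ℕ)
    (hrep : ∀ v : V, v ∉ T → ∀ a i j, i < m → j < m →
      f v (a * m + i) = f v (a * m + j))
    (k : ℕ → ℕ) (hk : StrictMono k)
    (hkT : ∀ n, walk head T s f (k n) ∈ T)
    (hkall : ∀ n, walk head T s f n ∈ T → ∃ j, k j = n) :
    ∀ a i j, i < m → j < m →
      walk head T s f (k (a * m + i)) = walk head T s f (k (a * m + j)) := by
  intro a i j hi hj
  have hm : 1 ≤ m := by omega
  classical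
  let σ : ℕ → V × (V → ℕ) := fun N => (walkStep head T s f)^[N] (s, fun _ => 0)
  have hwalk : ∀ n, walk head T s f n = (σ n).1 := fun _ => rfl
  have hstep : ∀ N, σ (N + 1) = walkStep head T s f (σ N) := fun N =>
    Function.iterate_succ_apply' _ _ _
  let A : ℕ → ℕ := fun n => match n with | 0 => 0 | (n + 1) => k n + 1
  have hA1 : ∀ n, A (n + 1) = k n + 1 := fun _ => rfl
  have hkTσ : ∀ n, (σ (k n)).1 ∈ T := fun n => hkT n
  have hAs : ∀ n, (σ (A n)).1 = s := by
    intro n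
    cases n with
    | zero => rfl
    | succ n =>
      rw [hA1 n, hstep]
      simp [walkStep, hkTσ n]
  have hc_hit : ∀ n, (σ (k n + 1)).2 = (σ (k n)).2 := by
    intro n
    rw [hstep]
    simp [walkStep, hkTσ n]
  have hAk : ∀ n, A n ≤ k n := by
    intro n
    cases n with
    | zero => exact Nat.zero_le _
    | succ n =>
      rw [hA1 n]
      exact Nat.succ_le_of_lt (hk (Nat.lt_succ_self n))
  have hnohit : ∀ n N, A n ≤ N → N < k n → (σ N).1 ∉ T := by
    intro n N h1 h2 hNT
    obtain ⟨j', hj'⟩ := hkall N (by rw [hwalk]; exact hNT)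
    cases n with
    | zero =>
      have : j' < 0 := hk.lt_iff_lt.mp (show k j' < k 0 by omega)
      omega
    | succ n =>
      rw [hA1 n] at h1
      have hlo : n < j' := hk.lt_iff_lt.mp (show k n < k j' by omega)
      have hhi : j' < n + 1 := hk.lt_iff_lt.mp (show k j' < k (n + 1) by omega)
      omega
  have W : ∀ (len : ℕ) (B : ℕ) (χ : V → ℤ), (∀ u, 0 ≤ χ u) →
      (∀ j', j' < len → (σ (B + j')).1 ∉ T) →
      RepAux.Legal T head f
        ((fun u => χ u + (if u = (σ B).1 then 1 else 0)), (σ B).2)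
        ((List.range' B len).map fun t => (σ t).1) ∧
      RepAux.fires head f
        ((fun u => χ u + (if u = (σ B).1 then 1 else 0)), (σ B).2)
        ((List.range' B len).map fun t => (σ t).1) =
        ((fun u => χ u + (if u = (σ (B + len)).1 then 1 else 0)), (σ (B + len)).2) := by
    intro len
    induction len with
    | zero =>
      intro B χ hχ _
      exact ⟨trivial, rfl⟩
    | succ len ih =>
      intro B χ hχ hnh
      have hBT : (σ B).1 ∉ T := by
        have := hnh 0 (Nat.succ_pos len)
        simpa using this
      have hs1a : (σ (B + 1)).1 = head (f (σ B).1 ((σ B).2 (σ B).1)) := by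
        rw [hstep]; simp [walkStep, hBT]
      have hs1b : (σ (B + 1)).2 =
          Function.update (σ B).2 (σ B).1 ((σ B).2 (σ B).1 + 1) := by
        rw [hstep]; simp [walkStep, hBT]
      have hfire : RepAux.fire head f
          ((fun u => χ u + (if u = (σ B).1 then 1 else 0)), (σ B).2) (σ B).1 =
          ((fun u => χ u + (if u = (σ (B + 1)).1 then 1 else 0)), (σ (B + 1)).2) := by
        rw [RepAux.fire_pair]
        refine Prod.ext ?_ hs1b.symm
        funext u
        beta_reduce
        rw [hs1a]
        ring
      have h2 : ∀ j', j' < len → (σ (B + 1 + j')).1 ∉ T := by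
        intro j' hj'
        have := hnh (j' + 1) (by omega)
        rw [show B + (j' + 1) = B + 1 + j' from by omega] at this
        exact this
      obtain ⟨ihL, ihF⟩ := ih (B + 1) χ hχ h2
      rw [show B + (len + 1) = B + 1 + len from by omega]
      rw [List.range'_succ, List.map_cons]
      refine ⟨⟨hBT, ?_, ?_⟩, ?_⟩
      · show 1 ≤ χ (σ B).1 + (if (σ B).1 = (σ B).1 then 1 else 0)
        rw [if_pos rfl]
        have h0 := hχ (σ B).1
        omega
      · rw [hfire]; exact ihL
      · rw [RepAux.fires_cons, hfire]; exact ihF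
  have hrunlem : ∀ (n : ℕ) (χ : V → ℤ), (∀ u, 0 ≤ χ u) →
      RepAux.Legal T head f ((fun u => χ u + (if u = s then 1 else 0)), (σ (A n)).2)
        ((List.range' (A n) (k n - A n)).map fun t => (σ t).1) ∧
      RepAux.fires head f ((fun u => χ u + (if u = s then 1 else 0)), (σ (A n)).2)
        ((List.range' (A n) (k n - A n)).map fun t => (σ t).1) =
        ((fun u => χ u + (if u = (σ (k n)).1 then 1 else 0)), (σ (k n)).2) := by
    intro n χ hχ
    have hAkn := hAk n
    have hnh : ∀ j', j' < k n - A n → (σ (A n + j')).1 ∉ T := by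
      intro j' h
      exact hnohit n (A n + j') (Nat.le_add_right _ _) (by omega)
    have hW := W (k n - A n) (A n) χ hχ hnh
    rw [show A n + (k n - A n) = k n from by omega] at hW
    rw [hAs n] at hW
    exact hW
  have block : ∀ a', (∀ u, m ∣ (σ (A (a' * m))).2 u) →
      (∃ t, ∀ i', i' < m → (σ (k (a' * m + i'))).1 = t) ∧
        (∀ u, m ∣ (σ (A (a' * m + m))).2 u) := by
    intro a' hdiv
    have asm : ∀ jj, jj ≤ m → ∃ L, RepAux.Legal T head f
        ((fun u => (m : ℤ) * (if u = s then 1 else 0)), (σ (A (a' * m))).2) L ∧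
        RepAux.fires head f
          ((fun u => (m : ℤ) * (if u = s then 1 else 0)), (σ (A (a' * m))).2) L =
          ((fun u => ((m : ℤ) - (jj : ℤ)) * (if u = s then 1 else 0)
              + ∑ i' ∈ Finset.range jj,
                  (if u = (σ (k (a' * m + i'))).1 then (1 : ℤ) else 0)),
           (σ (A (a' * m + jj))).2) := by
      intro jj
      induction jj with
      | zero =>
        intro _
        exact ⟨[], trivial, Prod.ext (funext fun u => by simp) rfl⟩
      | succ jj ih =>
        intro hjj
        obtain ⟨L, hL, hF⟩ := ih (by omega)
        set χbg : V → ℤ := fun u => ((m : ℤ) - ((jj : ℤ) + 1)) * (if u = s then 1 else 0)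
            + ∑ i' ∈ Finset.range jj,
                (if u = (σ (k (a' * m + i'))).1 then (1 : ℤ) else 0) with hχbg
        have hχpos : ∀ u, 0 ≤ χbg u := by
          intro u
          have hjm : (jj : ℤ) + 1 ≤ (m : ℤ) := by exact_mod_cast hjj
          have h2 : (0 : ℤ) ≤ ∑ i' ∈ Finset.range jj,
              (if u = (σ (k (a' * m + i'))).1 then (1 : ℤ) else 0) :=
            Finset.sum_nonneg fun i' _ => by split_ifs <;> norm_num
          have h1 : (0 : ℤ) ≤ ((m : ℤ) - ((jj : ℤ) + 1)) * (if u = s then 1 else 0) := by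
            split_ifs <;> omega
          simp only [hχbg]
          exact add_nonneg h1 h2
        obtain ⟨hRL, hRF⟩ := hrunlem (a' * m + jj) χbg hχpos
        have hstart : ((fun u => χbg u + (if u = s then 1 else 0)), (σ (A (a' * m + jj))).2) =
            RepAux.fires head f
              ((fun u => (m : ℤ) * (if u = s then 1 else 0)), (σ (A (a' * m))).2) L := by
          rw [hF]
          refine Prod.ext ?_ rfl
          funext u
          simp only [hχbg]
          push_cast
          ring
        rw [hstart] at hRL hRF
        refine ⟨L ++ _, RepAux.Legal_append head T f hL hRL, ?_⟩
        rw [RepAux.fires_append, hRF]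
        refine Prod.ext ?_ ?_
        · funext u
          simp only [hχbg]
          rw [Finset.sum_range_succ]
          push_cast
          ring
        · show (σ (k (a' * m + jj))).2 = (σ (A (a' * m + (jj + 1)))).2
          have hA' : A (a' * m + (jj + 1)) = k (a' * m + jj) + 1 := by
            rw [show a' * m + (jj + 1) = (a' * m + jj) + 1 from by omega, hA1]
          rw [hA', hc_hit]
    obtain ⟨L, hL, hF⟩ := asm m le_rfl
    have hComp : RepAux.Complete T (RepAux.fires head f
        ((fun u => (m : ℤ) * (if u = s then 1 else 0)), (σ (A (a' * m))).2) L) := by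
      rw [hF]
      intro v hv
      simp only [sub_self, zero_mul, zero_add]
      refine le_of_eq (Finset.sum_eq_zero ?_)
      intro i' _
      have hne : v ≠ (σ (k (a' * m + i'))).1 := by
        intro hvv
        exact hv (hvv ▸ hkTσ (a' * m + i'))
      rw [if_neg hne]
    obtain ⟨t, c', hdc', hfe⟩ := RepAux.lockstep head T f m hm hrep L.length L
      (σ (A (a' * m))).2 s le_rfl hdiv hL hComp
    rw [hF] at hfe
    have hfst := congrArg Prod.fst hfe
    have hsnd := congrArg Prod.snd hfe
    constructor
    · refine ⟨t, fun i' hi' => ?_⟩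
      have h1 := congrFun hfst (σ (k (a' * m + i'))).1
      simp only [sub_self, zero_mul, zero_add] at h1
      have hterm : (1 : ℤ) ≤ ∑ i'' ∈ Finset.range m,
          (if (σ (k (a' * m + i'))).1 = (σ (k (a' * m + i''))).1 then (1 : ℤ) else 0) := by
        have hb := Finset.single_le_sum
          (f := fun i'' => if (σ (k (a' * m + i'))).1 = (σ (k (a' * m + i''))).1
            then (1 : ℤ) else 0)
          (fun i'' _ => by beta_reduce; split_ifs <;> norm_num) (Finset.mem_range.mpr hi')
        simpa using hb
      by_cases hxt : (σ (k (a' * m + i'))).1 = t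
      · exact hxt
      · exfalso
        rw [if_neg hxt, mul_zero] at h1
        omega
    · intro u
      have hsnd' : (σ (A (a' * m + m))).2 = c' := hsnd
      rw [hsnd']
      exact hdc' u
  have hdivA : ∀ a', ∀ u, m ∣ (σ (A (a' * m))).2 u := by
    intro a'
    induction a' with
    | zero =>
      intro u
      rw [Nat.zero_mul]
      exact dvd_zero m
    | succ a' ih =>
      intro u
      rw [show (a' + 1) * m = a' * m + m from by ring]
      exact (block a' ih).2 u
  obtain ⟨t, ht⟩ := (block a (hdivA a)).1
  rw [hwalk (k (a * m + i)), hwalk (k (a * m + j)), ht i hi, ht j hj]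
end

section
/- For every particle configuration σ and every rotor configuration ρ on G, the stabilization σ° of σ satisfies σ°ρ = σρ. Consequently the action of particle configurations on rotor configurations descends to an action of the sandpile monoid Q° on rotor configurations. -/
open Function

/-- A strongly connected finite directed multigraph (self-loops and multiple arcs
allowed), given by source and head maps `src, head : E → V`, together with a nonempty
target set `T` and a rotor mechanism at each vertex: `next` is a cyclic ordering of
the arcs emanating from each vertex (it permutes the arcs, preserves the source, and
acts transitively on the arcs emanating from any fixed vertex). -/
structure RotorSystem (V E : Type) [Fintype V] [DecidableEq V] [Fintype E]
    [DecidableEq E] where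
  src : E → V
  head : E → V
  T : Finset V
  T_nonempty : T.Nonempty
  strongly_connected : ∀ v w : V,
    Relation.ReflTransGen (fun a b => ∃ e : E, src e = a ∧ head e = b) v w
  next : E → E
  next_src : ∀ e, src (next e) = src e
  next_bijective : Function.Bijective next
  next_cyclic : ∀ e e', src e = src e' → ∃ k : ℕ, next^[k] e = e'

namespace RotorSystem

variable {V E : Type} [Fintype V] [DecidableEq V] [Fintype E] [DecidableEq E]

/-- The set `V₀ = V - T` of non-target vertices. -/
abbrev V0 (S : RotorSystem V E) : Type := {v : V // v ∉ S.T}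

/-- A rotor configuration: each non-target vertex carries an arc emanating from it. -/
abbrev RConf (S : RotorSystem V E) : Type :=
  {ρ : S.V0 → E // ∀ v : S.V0, S.src (ρ v) = v.1}

/-- A particle configuration: a number of particles at each non-target vertex. -/
abbrev PConf (S : RotorSystem V E) : Type := S.V0 → ℕ

variable (S : RotorSystem V E)

/-- One step of a single particle's rotor walk: at a non-target vertex the rotor is
first progressed and the particle then moves along the new rotor arc; target vertices
absorb the particle. -/
def step (p : V × S.RConf) : V × S.RConf :=
  if h : p.1 ∈ S.T then p
  else
    (S.head (S.next (p.2.1 ⟨p.1, h⟩)),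
      ⟨Function.update p.2.1 ⟨p.1, h⟩ (S.next (p.2.1 ⟨p.1, h⟩)), by
        intro w
        rcases eq_or_ne w ⟨p.1, h⟩ with rfl | hw
        · rw [Function.update_self, S.next_src]
          exact p.2.2 ⟨p.1, h⟩
        · rw [Function.update_of_ne hw]
          exact p.2.2 w⟩)

open Classical in
/-- Route a single particle from `x` by rotor walk until it first reaches the target
set; the result is the pair (final position, final rotor configuration). -/
noncomputable def route (x : V) (ρ : S.RConf) : V × S.RConf :=
  if h : ∃ n, (S.step^[n] (x, ρ)).1 ∈ S.T then S.step^[Nat.find h] (x, ρ) else (x, ρ)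

/-- `t_x(ρ)`: the target vertex reached by a single particle started at `x` with
initial rotor configuration `ρ`. -/
noncomputable def tgt (x : V) (ρ : S.RConf) : V := (S.route x ρ).1

/-- The particle addition operator `E_v`: add one particle at `v` and route it to the
target set. -/
noncomputable def addAt (v : S.V0) (ρ : S.RConf) : S.RConf := (S.route v.1 ρ).2

/-- The action `σρ` of a particle configuration on a rotor configuration: place
`σ v` particles at each vertex `v` and route them all to the target set. -/
noncomputable def act (σ : S.PConf) (ρ : S.RConf) : S.RConf :=
  (Finset.univ : Finset S.V0).toList.foldr (fun v r => (S.addAt v)^[σ v] r) ρ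

/-- Equivalence of rotor configurations: `ρ ≡ ρ'` iff `σρ = σρ'` for some particle
configuration `σ`. -/
def REquiv (ρ ρ' : S.RConf) : Prop := ∃ σ : S.PConf, S.act σ ρ = S.act σ ρ'

/-- The outdegree `d(v)`. -/
def outdeg (v : V) : ℕ := (Finset.univ.filter fun e : E => S.src e = v).card

/-- The number `d(v,w)` of arcs from `v` to `w`. -/
def numArcs (v w : V) : ℕ :=
  (Finset.univ.filter fun e : E => S.src e = v ∧ S.head e = w).card

/-- A particle configuration is stable if every non-target vertex holds at most
`d(v) - 1` particles. -/
def IsStable (σ : S.PConf) : Prop := ∀ v : S.V0, σ v < S.outdeg v.1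

/-- Parallel toppling: every unstable vertex topples once, sending one particle along
each arc emanating from it. -/
def toppleStep (σ : S.PConf) : S.PConf := fun v =>
  (if S.outdeg v.1 ≤ σ v then σ v - S.outdeg v.1 else σ v) +
    ∑ w : S.V0, (if S.outdeg w.1 ≤ σ w then S.numArcs w.1 v.1 else 0)

open Classical in
/-- The stabilization `σ°` of a particle configuration. -/
noncomputable def stabilize (σ : S.PConf) : S.PConf :=
  if h : ∃ n, S.IsStable (S.toppleStep^[n] σ) then S.toppleStep^[Nat.find h] σ else σ

/-- A stable particle configuration is recurrent if it is reachable (by adding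
particles and stabilizing) from every particle configuration.  The recurrent
configurations form the sandpile group `S(G/T)` under addition-then-stabilization. -/
def IsRecurrent (τ : S.PConf) : Prop :=
  S.IsStable τ ∧ ∀ σ : S.PConf, ∃ τ' : S.PConf, τ = S.stabilize (τ' + σ)

/-- `e` is the identity element of the sandpile group `S(G/T)`. -/
def IsSandpileIdentity (e : S.PConf) : Prop :=
  S.IsRecurrent e ∧ ∀ τ : S.PConf, S.IsRecurrent τ → S.stabilize (e + τ) = τ

/-- The rotor arcs of `ρ`, as a relation on vertices. -/
def rotorRel (ρ : S.RConf) (a b : V) : Prop :=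
  ∃ h : a ∉ S.T, S.head (ρ.1 ⟨a, h⟩) = b

/-- A rotor configuration is acyclic if its rotor arcs contain no directed cycle. -/
def IsAcyclicConf (ρ : S.RConf) : Prop :=
  ∀ v : V, ¬ Relation.TransGen (S.rotorRel ρ) v v

/-- `ρ'` is obtained from `ρ` by pushing a cycle: there are distinct non-target
vertices `v_0, …, v_{r-1}` with the rotor arc of `v_j` pointing to `v_{j+1}`
(cyclically); each such rotor is regressed one step, other rotors are unchanged. -/
def IsCyclePush (ρ ρ' : S.RConf) : Prop :=
  ∃ r : ℕ, 0 < r ∧ ∃ f : ZMod r → S.V0, Function.Injective f ∧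
    (∀ j : ZMod r, S.head (ρ.1 (f j)) = (f (j + 1)).1) ∧
    (∀ j : ZMod r, S.next (ρ'.1 (f j)) = ρ.1 (f j)) ∧
    (∀ v : S.V0, v ∉ Set.range f → ρ'.1 v = ρ.1 v)

end RotorSystem

/-!
Put particles and rotors into one state and call firing a vertex that holds a particle a legal
move: it advances the rotor there and sends the particle along the new rotor arc. Firings at
distinct vertices commute, so all legal sequences that empty `V₀` end in the same rotor
configuration. Routing the particles of `σ` one at a time is such a sequence (every rotor walk
reaches `T`, by strong connectivity), and so is toppling followed by routing: firing `v`
exactly `d(v)` times turns its rotor once around, sending one particle along each arc and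
restoring the rotor. Hence `σρ = σ°ρ`, and likewise `(σ₁ + σ₂)ρ = σ₁(σ₂ρ)`.
-/

namespace RotorSystem

variable {V E : Type} [Fintype V] [DecidableEq V] [Fintype E] [DecidableEq E]
variable (S : RotorSystem V E)

def advance (ρ : S.RConf) (v : S.V0) : S.RConf :=
  ⟨Function.update ρ.1 v (S.next (ρ.1 v)), by
    intro w
    rcases eq_or_ne w v with rfl | hw
    · rw [Function.update_self, S.next_src, ρ.2]
    · rw [Function.update_of_ne hw, ρ.2]⟩

lemma advance_apply_of_ne (ρ : S.RConf) {v w : S.V0} (h : w ≠ v) :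
    (S.advance ρ v).1 w = ρ.1 w :=
  Function.update_of_ne h _ _

lemma advance_comm (ρ : S.RConf) {v w : S.V0} (h : v ≠ w) :
    S.advance (S.advance ρ w) v = S.advance (S.advance ρ v) w := by
  apply Subtype.ext
  simp only [advance, Function.update_of_ne h, Function.update_of_ne h.symm]
  exact Function.update_comm h.symm _ _ _

/-- One particle at `x`; it vanishes when `x` is a target. -/
def hit (x : V) : S.PConf := fun w => if w.1 = x then 1 else 0

lemma hit_of_mem {x : V} (hx : x ∈ S.T) : S.hit x = 0 := by
  funext w
  exact if_neg (by rintro rfl; exact w.2 hx)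

lemma hit_val (v : S.V0) : S.hit v.1 = Pi.single v 1 := by
  funext w
  simp [hit, Pi.single_apply, Subtype.ext_iff]

abbrev State := S.PConf × S.RConf

def fire (v : S.V0) (p : S.State) : S.State :=
  (p.1 - Pi.single v 1 + S.hit (S.head (S.next (p.2.1 v))), S.advance p.2 v)

def FireStep (p q : S.State) : Prop := ∃ v, 0 < p.1 v ∧ S.fire v p = q

abbrev Reaches : S.State → S.State → Prop := Relation.ReflTransGen S.FireStep

lemma fire_fst_pos {p : S.State} {u v : S.V0} (hu : 0 < p.1 u) (h : u ≠ v) :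
    0 < (S.fire v p).1 u := by
  simp only [fire, Pi.add_apply, Pi.sub_apply, Pi.single_apply, if_neg h]
  omega

lemma fire_comm {p : S.State} {v w : S.V0} (h : v ≠ w) (hv : 0 < p.1 v) (hw : 0 < p.1 w) :
    S.fire v (S.fire w p) = S.fire w (S.fire v p) := by
  simp only [fire, S.advance_apply_of_ne _ h, S.advance_apply_of_ne _ h.symm,
    S.advance_comm _ h]
  congr 1
  funext x
  simp only [Pi.add_apply, Pi.sub_apply, Pi.single_apply]
  split_ifs <;> simp_all <;> omega

lemma fire_add {p : S.State} {v : S.V0} (hv : 0 < p.1 v) (a : S.PConf) :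
    S.fire v (p.1 + a, p.2) = ((S.fire v p).1 + a, (S.fire v p).2) := by
  simp only [fire, Prod.mk.injEq, and_true]
  funext x
  simp only [Pi.add_apply, Pi.sub_apply, Pi.single_apply]
  split_ifs <;> simp_all <;> omega

lemma Reaches.add_left {c c' : S.PConf} {ρ ρ' : S.RConf} (h : S.Reaches (c, ρ) (c', ρ'))
    (a : S.PConf) : S.Reaches (c + a, ρ) (c' + a, ρ') := by
  suffices ∀ p q, S.Reaches p q → S.Reaches (p.1 + a, p.2) (q.1 + a, q.2) from this _ _ h
  intro p q hpq
  induction hpq with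
  | refl => rfl
  | tail _ hstep ih =>
    obtain ⟨v, hv, rfl⟩ := hstep
    exact ih.tail ⟨v, Nat.add_pos_left hv _, S.fire_add hv a⟩

lemma Reaches.add_right {c c' : S.PConf} {ρ ρ' : S.RConf} (h : S.Reaches (c, ρ) (c', ρ'))
    (a : S.PConf) : S.Reaches (a + c, ρ) (a + c', ρ') := by
  simpa only [add_comm a] using h.add_left S a

lemma reaches_sum {ι : Type*} (s : Finset ι) (a b : ι → S.PConf) (ρ : S.RConf)
    (h : ∀ i ∈ s, S.Reaches (a i, ρ) (b i, ρ)) :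
    S.Reaches (∑ i ∈ s, a i, ρ) (∑ i ∈ s, b i, ρ) := by
  classical
  induction s using Finset.induction_on with
  | empty => rfl
  | insert i s hi ih =>
    rw [Finset.sum_insert hi, Finset.sum_insert hi]
    have hs := ih fun j hj => h j (Finset.mem_insert_of_mem hj)
    exact ((h i (Finset.mem_insert_self i s)).add_left S _).trans (hs.add_right S _)

lemma fireStep_diamond {p q r : S.State} (hq : S.FireStep p q) (hr : S.FireStep p r) :
    ∃ s, Relation.ReflGen S.FireStep q s ∧ S.Reaches r s := by
  obtain ⟨v, hv, rfl⟩ := hq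
  obtain ⟨w, hw, rfl⟩ := hr
  rcases eq_or_ne v w with rfl | h
  · exact ⟨_, Relation.ReflGen.refl, Relation.ReflTransGen.refl⟩
  · refine ⟨S.fire w (S.fire v p), Relation.ReflGen.single ⟨w, S.fire_fst_pos hw h.symm, rfl⟩,
      Relation.ReflTransGen.single ⟨v, S.fire_fst_pos hv h, S.fire_comm h hv hw⟩⟩

lemma eq_of_reaches_of_fst_eq_zero {p q : S.State} (h : S.Reaches p q) (hp : p.1 = 0) :
    q = p := by
  rcases h.cases_head with rfl | ⟨_, ⟨v, hv, _⟩, _⟩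
  · rfl
  · simp [hp] at hv

/-- The abelian property: legal firings commute, so by Church–Rosser all legal firing sequences
that empty the non-target vertices end in the same rotor configuration. -/
lemma eq_of_reaches_zero {p : S.State} {ρ₁ ρ₂ : S.RConf} (h₁ : S.Reaches p (0, ρ₁))
    (h₂ : S.Reaches p (0, ρ₂)) : ρ₁ = ρ₂ := by
  obtain ⟨s, hs₁, hs₂⟩ := Relation.church_rosser (fun _ _ _ => S.fireStep_diamond) h₁ h₂
  rw [S.eq_of_reaches_of_fst_eq_zero hs₁ rfl] at hs₂
  exact congrArg Prod.snd (S.eq_of_reaches_of_fst_eq_zero hs₂ rfl)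

def arcsFrom (v : V) : Finset E := Finset.univ.filter fun e => S.src e = v

lemma src_next_iterate (e : E) (k : ℕ) : S.src (S.next^[k] e) = S.src e := by
  induction k with
  | zero => rfl
  | succ k ih => rw [Function.iterate_succ_apply', S.next_src, ih]

lemma image_iterate_next (e : E) :
    (Finset.range (minimalPeriod S.next e)).image (S.next^[·] e) = S.arcsFrom (S.src e) := by
  have hpos : 0 < minimalPeriod S.next e :=
    minimalPeriod_pos_of_mem_periodicPts (S.next_bijective.injective.mem_periodicPts e)
  ext e'
  simp only [Finset.mem_image, Finset.mem_range, arcsFrom, Finset.mem_filter,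
    Finset.mem_univ, true_and]
  constructor
  · rintro ⟨k, -, rfl⟩
    exact S.src_next_iterate e k
  · intro he'
    obtain ⟨k, rfl⟩ := S.next_cyclic e e' he'.symm
    exact ⟨k % minimalPeriod S.next e, Nat.mod_lt k hpos, iterate_mod_minimalPeriod_eq⟩

lemma outdeg_src (e : E) : S.outdeg (S.src e) = minimalPeriod S.next e := by
  rw [outdeg, ← arcsFrom, ← S.image_iterate_next, Finset.card_image_of_injOn, Finset.card_range]
  simpa only [Finset.coe_range] using iterate_injOn_Iio_minimalPeriod

lemma isPeriodicPt_next_outdeg (e : E) : IsPeriodicPt S.next (S.outdeg (S.src e)) e := by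
  rw [S.outdeg_src]
  exact isPeriodicPt_minimalPeriod _ _

lemma sum_arcsFrom_hit_head (v : V) :
    ∑ a ∈ S.arcsFrom v, S.hit (S.head a) = fun w => S.numArcs v w.1 := by
  funext w
  simp only [Finset.sum_apply, hit, Finset.sum_boole, arcsFrom, Finset.filter_filter, numArcs,
    eq_comm, Nat.cast_id]

lemma sum_hit_head_next_iterate (e : E) :
    ∑ j ∈ Finset.range (S.outdeg (S.src e)), S.hit (S.head (S.next^[j + 1] e)) =
      fun w => S.numArcs (S.src e) w.1 := by
  have hshift := (Finset.sum_range_succ' (fun j => S.hit (S.head (S.next^[j] e)))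
    (S.outdeg (S.src e))).symm.trans (Finset.sum_range_succ _ _)
  rw [S.outdeg_src, iterate_minimalPeriod, Function.iterate_zero_apply] at hshift
  rw [S.outdeg_src, add_right_cancel hshift, ← S.sum_arcsFrom_hit_head, ← S.image_iterate_next,
    Finset.sum_image (by simpa only [Finset.coe_range] using iterate_injOn_Iio_minimalPeriod)]

lemma advance_iterate_val (ρ : S.RConf) (v : S.V0) (k : ℕ) :
    ((S.advance · v)^[k] ρ).1 = Function.update ρ.1 v (S.next^[k] (ρ.1 v)) := by
  induction k with
  | zero => exact (Function.update_eq_self v ρ.1).symm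
  | succ k ih =>
    rw [Function.iterate_succ_apply']
    change Function.update ((S.advance · v)^[k] ρ).1 v (S.next (((S.advance · v)^[k] ρ).1 v)) = _
    rw [ih, Function.update_self, Function.update_idem, ← Function.iterate_succ_apply' S.next]

lemma reaches_fire_iterate (v : S.V0) (ρ : S.RConf) (k : ℕ) :
    S.Reaches (Pi.single v k, ρ)
      (∑ j ∈ Finset.range k, S.hit (S.head (S.next^[j + 1] (ρ.1 v))), (S.advance · v)^[k] ρ) := by
  induction k with
  | zero => simp only [Pi.single_zero, Finset.range_zero, Finset.sum_empty]; rfl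
  | succ k ih =>
    rw [Pi.single_add]
    refine (ih.add_left S _).tail ⟨v, by simp, ?_⟩
    simp only [fire, Function.iterate_succ_apply', Finset.sum_range_succ, add_tsub_cancel_right,
      S.advance_iterate_val, Function.update_self]

lemma advance_iterate_outdeg (ρ : S.RConf) (v : S.V0) :
    (S.advance · v)^[S.outdeg v.1] ρ = ρ := by
  apply Subtype.ext
  rw [S.advance_iterate_val, ← ρ.2 v, (S.isPeriodicPt_next_outdeg _).eq, Function.update_eq_self]

lemma reaches_topple (v : S.V0) (ρ : S.RConf) :
    S.Reaches (Pi.single v (S.outdeg v.1), ρ) (fun w => S.numArcs v.1 w.1, ρ) := by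
  have h := S.reaches_fire_iterate v ρ (S.outdeg v.1)
  rwa [S.advance_iterate_outdeg, ← ρ.2 v, S.sum_hit_head_next_iterate, ρ.2 v] at h

lemma reaches_toppleStep (σ : S.PConf) (ρ : S.RConf) :
    S.Reaches (σ, ρ) (S.toppleStep σ, ρ) := by
  let U := Finset.univ.filter fun v : S.V0 => S.outdeg v.1 ≤ σ v
  let r : S.PConf := fun v => if S.outdeg v.1 ≤ σ v then σ v - S.outdeg v.1 else σ v
  have hσ : r + ∑ v ∈ U, Pi.single v (S.outdeg v.1) = σ := by
    funext w
    simp only [Pi.add_apply, Finset.sum_apply, Finset.sum_pi_single, U, r, Finset.mem_filter,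
      Finset.mem_univ, true_and]
    split_ifs <;> omega
  have htopple : r + ∑ v ∈ U, (fun w => S.numArcs v.1 w.1) = S.toppleStep σ := by
    funext w
    simp only [Pi.add_apply, Finset.sum_apply, U, Finset.sum_filter, toppleStep, r,
      apply_ite (fun f : S.PConf => f w), Pi.zero_apply]
  have h := (S.reaches_sum U _ _ ρ fun v _ => S.reaches_topple v ρ).add_right S r
  rwa [hσ, htopple] at h

lemma reaches_stabilize (σ : S.PConf) (ρ : S.RConf) :
    S.Reaches (σ, ρ) (S.stabilize σ, ρ) := by
  have h : ∀ n, S.Reaches (σ, ρ) (S.toppleStep^[n] σ, ρ) := by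
    intro n
    induction n with
    | zero => rfl
    | succ n ih =>
      rw [Function.iterate_succ_apply']
      exact ih.trans (S.reaches_toppleStep _ ρ)
  unfold stabilize
  split
  exacts [h _, h 0]

lemma step_of_mem {p : V × S.RConf} (h : p.1 ∈ S.T) : S.step p = p := dif_pos h

lemma step_of_notMem {p : V × S.RConf} (h : p.1 ∉ S.T) :
    S.step p = (S.head (S.next (p.2.1 ⟨p.1, h⟩)), S.advance p.2 ⟨p.1, h⟩) := dif_neg h

lemma reaches_step (p : V × S.RConf) :
    S.Reaches (S.hit p.1, p.2) (S.hit (S.step p).1, (S.step p).2) := by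
  by_cases h : p.1 ∈ S.T
  · rw [S.step_of_mem h]
  · rw [S.step_of_notMem h]
    refine .single ⟨⟨p.1, h⟩, by simp [hit], ?_⟩
    simp only [fire, S.hit_val ⟨p.1, h⟩, tsub_self, zero_add]

lemma reaches_step_iterate (x : V) (ρ : S.RConf) (n : ℕ) :
    S.Reaches (S.hit x, ρ) (S.hit (S.step^[n] (x, ρ)).1, (S.step^[n] (x, ρ)).2) := by
  induction n with
  | zero => rfl
  | succ n ih =>
    rw [Function.iterate_succ_apply']
    exact ih.trans (S.reaches_step _)

lemma step_iterate_rotor (x : V) (ρ : S.RConf) (v : S.V0) (n : ℕ) :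
    (S.step^[n] (x, ρ)).2.1 v =
      S.next^[Nat.count (fun i => (S.step^[i] (x, ρ)).1 = v.1) n] (ρ.1 v) := by
  induction n with
  | zero => rfl
  | succ n ih =>
    rw [Function.iterate_succ_apply', Nat.count_succ]
    by_cases hT : (S.step^[n] (x, ρ)).1 ∈ S.T
    · rw [S.step_of_mem hT, if_neg (by rintro h; exact v.2 (h ▸ hT)), add_zero, ih]
    · rw [S.step_of_notMem hT]
      by_cases hv : v = ⟨_, hT⟩
      · subst hv
        simp only [advance, Function.update_self, if_true, ih, Function.iterate_succ_apply']
      · rw [S.advance_apply_of_ne _ hv, ih, if_neg (fun h => hv (Subtype.ext h.symm)), add_zero]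

/-- The rotor at a frequently visited vertex turns around indefinitely, so each of its arcs
is traversed infinitely often. -/
lemma infinite_visits_head {x : V} {ρ : S.RConf} {v : S.V0}
    (hv : {n | (S.step^[n] (x, ρ)).1 = v.1}.Infinite) {e : E} (he : S.src e = v.1) :
    {n | (S.step^[n] (x, ρ)).1 = S.head e}.Infinite := by
  obtain ⟨k, rfl⟩ := S.next_cyclic (ρ.1 v) e (by rw [ρ.2 v, he])
  have hd : 0 < S.outdeg v.1 := by
    rw [← ρ.2 v, S.outdeg_src]
    exact minimalPeriod_pos_of_mem_periodicPts (S.next_bijective.injective.mem_periodicPts _)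
  have hpos : ∀ j, 0 < S.outdeg v.1 * (j + 1) := fun j => Nat.mul_pos hd j.succ_pos
  let visit : ℕ → ℕ := Nat.nth fun n => (S.step^[n] (x, ρ)).1 = v.1
  refine Set.infinite_of_injective_forall_mem
    (f := fun j => visit (k + S.outdeg v.1 * (j + 1) - 1) + 1) ?_ fun j => ?_
  · intro i j hij
    have h := (Nat.nth_strictMono hv).injective (Nat.succ_injective hij)
    have : S.outdeg v.1 * (i + 1) = S.outdeg v.1 * (j + 1) := by
      have := hpos i
      have := hpos j
      omega
    exact Nat.succ_injective (Nat.eq_of_mul_eq_mul_left hd this)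
  · have hN : k + S.outdeg v.1 * (j + 1) - 1 + 1 = k + S.outdeg v.1 * (j + 1) := by
      have := hpos j
      omega
    have hvisit : (S.step^[visit (k + S.outdeg v.1 * (j + 1) - 1)] (x, ρ)).1 = v.1 :=
      Nat.nth_mem_of_infinite hv _
    have hT : (S.step^[visit (k + S.outdeg v.1 * (j + 1) - 1)] (x, ρ)).1 ∉ S.T := by
      rw [hvisit]
      exact v.2
    have hperiod := ((S.isPeriodicPt_next_outdeg (ρ.1 v)).mul_const (j + 1)).eq
    rw [ρ.2 v] at hperiod
    simp only [Set.mem_ofPred_eq, Function.iterate_succ_apply', S.step_of_notMem hT]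
    rw [show (⟨_, hT⟩ : S.V0) = v from Subtype.ext hvisit, S.step_iterate_rotor,
      Nat.count_nth_of_infinite hv, ← Function.iterate_succ_apply' S.next, Nat.succ_eq_add_one,
      hN, Function.iterate_add_apply, hperiod]

/-- A rotor walk avoiding `T` would visit some vertex infinitely often, hence every vertex
reachable from it, hence `T` by strong connectivity. -/
lemma exists_step_iterate_mem (x : V) (ρ : S.RConf) : ∃ n, (S.step^[n] (x, ρ)).1 ∈ S.T := by
  by_contra! hT
  obtain ⟨y, hy⟩ := Finite.exists_infinite_fiber fun n => (S.step^[n] (x, ρ)).1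
  have hreach : ∀ w, Relation.ReflTransGen (fun a b => ∃ e : E, S.src e = a ∧ S.head e = b) y w →
      {n | (S.step^[n] (x, ρ)).1 = w}.Infinite := by
    intro w hw
    induction hw with
    | refl => exact Set.infinite_coe_iff.mp hy
    | tail _ hab ih =>
      obtain ⟨e, rfl, rfl⟩ := hab
      obtain ⟨n, hn⟩ := ih.nonempty
      exact S.infinite_visits_head (v := ⟨S.src e, hn ▸ hT n⟩) ih rfl
  obtain ⟨t, ht⟩ := S.T_nonempty
  obtain ⟨n, hn⟩ := (hreach t (S.strongly_connected y t)).nonempty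
  exact hT n (hn ▸ ht)

lemma route_eq_step_iterate (x : V) (ρ : S.RConf) :
    ∃ n, (S.step^[n] (x, ρ)).1 ∈ S.T ∧ S.route x ρ = S.step^[n] (x, ρ) := by
  have h := S.exists_step_iterate_mem x ρ
  rw [route, dif_pos h]
  exact ⟨_, Nat.find_spec h, rfl⟩

lemma reaches_addAt (v : S.V0) (ρ : S.RConf) :
    S.Reaches (Pi.single v 1, ρ) (0, S.addAt v ρ) := by
  obtain ⟨n, hn, hroute⟩ := S.route_eq_step_iterate v.1 ρ
  have h := S.reaches_step_iterate v.1 ρ n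
  rwa [S.hit_val, S.hit_of_mem hn, ← hroute] at h

lemma reaches_addAt_iterate (v : S.V0) (ρ : S.RConf) (k : ℕ) :
    S.Reaches (Pi.single v k, ρ) (0, (S.addAt v)^[k] ρ) := by
  induction k generalizing ρ with
  | zero => simp only [Pi.single_zero, Function.iterate_zero_apply]; rfl
  | succ k ih =>
    rw [Function.iterate_succ_apply, add_comm, Pi.single_add]
    have h := (S.reaches_addAt v ρ).add_left S (Pi.single v k)
    rw [zero_add] at h
    exact h.trans (ih _)

lemma reaches_foldr_addAt (σ : S.PConf) (ρ : S.RConf) (L : List S.V0) :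
    S.Reaches ((L.map fun v => Pi.single v (σ v)).sum, ρ)
      (0, L.foldr (fun v r => (S.addAt v)^[σ v] r) ρ) := by
  induction L with
  | nil => rfl
  | cons v L ih =>
    rw [List.map_cons, List.sum_cons, List.foldr_cons]
    have h := ih.add_right S (Pi.single v (σ v))
    rw [add_zero] at h
    exact h.trans (S.reaches_addAt_iterate v _ (σ v))

lemma reaches_act (σ : S.PConf) (ρ : S.RConf) : S.Reaches (σ, ρ) (0, S.act σ ρ) := by
  rw [act]
  simpa only [Finset.sum_map_toList, Finset.univ_sum_single] using
    S.reaches_foldr_addAt σ ρ Finset.univ.toList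

lemma act_eq_of_reaches {σ : S.PConf} {ρ ρ' : S.RConf} (h : S.Reaches (σ, ρ) (0, ρ')) :
    S.act σ ρ = ρ' :=
  S.eq_of_reaches_zero (S.reaches_act σ ρ) h

lemma act_stabilize (σ : S.PConf) (ρ : S.RConf) : S.act (S.stabilize σ) ρ = S.act σ ρ :=
  (S.act_eq_of_reaches ((S.reaches_stabilize σ ρ).trans (S.reaches_act _ ρ))).symm

lemma act_add (σ₁ σ₂ : S.PConf) (ρ : S.RConf) : S.act (σ₁ + σ₂) ρ = S.act σ₁ (S.act σ₂ ρ) := by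
  refine S.act_eq_of_reaches (.trans ?_ (S.reaches_act σ₁ _))
  simpa only [add_zero] using (S.reaches_act σ₂ ρ).add_right S σ₁

end RotorSystem

open RotorSystem in
/-- **Lemma (the action descends to the sandpile monoid).**
For every particle configuration `σ` and rotor configuration `ρ`, `σ°ρ = σρ`; hence
the action of particle configurations on rotor configurations descends to an action
of the sandpile monoid `Q°` (stable configurations under `(σ₁,σ₂) ↦ (σ₁+σ₂)°`). -/
theorem stabilize_act {V E : Type} [Fintype V] [DecidableEq V] [Fintype E]
    [DecidableEq E] (S : RotorSystem V E) :
    (∀ (σ : S.PConf) (ρ : S.RConf), S.act (S.stabilize σ) ρ = S.act σ ρ) ∧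
    (∀ (σ₁ σ₂ : S.PConf) (ρ : S.RConf),
      S.act (S.stabilize (σ₁ + σ₂)) ρ = S.act σ₁ (S.act σ₂ ρ)) :=
  ⟨S.act_stabilize, fun σ₁ σ₂ ρ => by rw [S.act_stabilize, S.act_add]⟩
end
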